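/- arXiv:1109.5455 — 9 statements merged into one kernel-verified Lean document; each statement's English description precedes it below -/
import Mathlib

section
/- Let A ∈ ℂ^{n×n}, σ ∈ ℂ not an eigenvalue of A, B = (A-σI)^{-1}, and y a unit vector with y^H B y ≠ 0. If u_J satisfies u_J ⟂ y and (I - yy^H)(A - σI)(I - yy^H) u_J = -(Ay - νy), then u_J = γ B y - y with γ = 1/(y^H B y). -/
/-!
Since `u_J ⟂ y`, the inner projector acts trivially, and because `(A - σ)y = Ay - σy` the
residual cancels against `Ay`: the equation says `(A - σ)(u_J + y) = c y` for a scalar `c`.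
Applying `B` gives `u_J + y = c By`, and pairing with the unit vector `y` forces `c yᴴBy = 1`.
-/

local notation "⟪" x ", " y "⟫" => @inner ℂ _ _ x y

section

variable {𝕜 E : Type*} [RCLike 𝕜] [NormedAddCommGroup E] [InnerProductSpace 𝕜 E]

theorem shift_apply_add_eq_smul_of_correction {A : E →L[𝕜] E} {σ ν : 𝕜} {y u : E}
    (h : (A - σ • 1) u - inner 𝕜 y ((A - σ • 1) u) • y = -(A y - ν • y)) :
    (A - σ • 1) (u + y) = (inner 𝕜 y ((A - σ • 1) u) - σ + ν) • y := by
  rw [sub_eq_iff_eq_add] at h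
  nth_rw 1 [map_add, h]
  simp only [sub_apply, smul_apply, one_apply_eq_self]
  module

theorem eq_smul_apply_of_mul_eq_one {B T : E →L[𝕜] E} (hBT : B * T = 1) {x y : E} {c : 𝕜}
    (h : T x = c • y) : x = c • B y := by
  simpa [← mul_apply_eq_comp, hBT] using congrArg B h

theorem eq_inv_inner_smul_sub_of_add_eq_smul {y u v : E} {c : 𝕜} (hy : ‖y‖ = 1)
    (horth : inner 𝕜 y u = 0) (h : u + y = c • v) : u = (inner 𝕜 y v)⁻¹ • v - y := by
  have hc : c * inner 𝕜 y v = 1 := by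
    have := congrArg (inner 𝕜 y) h
    rwa [inner_add_right, inner_smul_right, horth, zero_add, inner_self_eq_norm_sq_to_K, hy,
      RCLike.ofReal_one, one_pow, eq_comm] at this
  rw [← eq_inv_of_mul_eq_one_left hc, ← h, add_sub_cancel_right]

end

theorem jd_exact_solution_general {E : Type*} [NormedAddCommGroup E] [InnerProductSpace ℂ E]
    (A B : E →L[ℂ] E) (σ ν : ℂ)
    (hBA : B * (A - σ • 1) = 1)
    (y : E) (hy : ‖y‖ = 1)
    (uJ : E) (horth : ⟪y, uJ⟫ = 0)
    (heq : (A - σ • 1) (uJ - ⟪y, uJ⟫ • y)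
            - ⟪y, (A - σ • 1) (uJ - ⟪y, uJ⟫ • y)⟫ • y
          = -(A y - ν • y)) :
    uJ = (⟪y, B y⟫)⁻¹ • B y - y := by
  rw [horth, zero_smul, sub_zero] at heq
  exact eq_inv_inner_smul_sub_of_add_eq_smul hy horth
    (eq_smul_apply_of_mul_eq_one hBA (shift_apply_add_eq_smul_of_correction heq))

/-- If `u_J ⟂ y` solves the Jacobi–Davidson correction equation
`(I - yyᴴ)(A - σI)(I - yyᴴ) u_J = -(Ay - νy)`, then `u_J = γ • By - y`
with `γ = 1/(yᴴ B y)`. -/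
theorem jd_exact_solution {E : Type*} [NormedAddCommGroup E] [InnerProductSpace ℂ E]
    (A B : E →L[ℂ] E) (σ ν : ℂ)
    (hBA : B * (A - σ • 1) = 1) (hAB : (A - σ • 1) * B = 1)
    (y : E) (hy : ‖y‖ = 1)
    (hyBy : ⟪y, B y⟫ ≠ 0)
    (uJ : E) (horth : ⟪y, uJ⟫ = 0)
    (heq : (A - σ • 1) (uJ - ⟪y, uJ⟫ • y)
            - ⟪y, (A - σ • 1) (uJ - ⟪y, uJ⟫ • y)⟫ • y
          = -(A y - ν • y)) :
    uJ = (⟪y, B y⟫)⁻¹ • B y - y :=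
  jd_exact_solution_general A B σ ν hBA y hy uJ horth heq
end

section
/- With the hypotheses of the two previous results (u_S = (σ-ν)By + y, u_J = γBy - y, γ = 1/(y^H B y), y ∈ 𝒱, σ ≠ ν), the projections of u_S and u_J onto the orthogonal complement of a subspace 𝒱 containing y are proportional: (I - P_V) B y = (1/(σ-ν)) (I - P_V) u_S = (1/γ) (I - P_V) u_J, where P_V is the orthogonal projector onto 𝒱. Consequently span(𝒱 ∪ {u_S}) = span(𝒱 ∪ {u_J}) whenever (I - P_V) B y ≠ 0. -/
local notation "⟪" x ", " y "⟫" => @inner ℂ _ _ x y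

/-! Both `u_S` and `u_J` have the form `c • B y + k` with `c ≠ 0` and `k ∈ 𝒱` (a multiple of `y`).
The complementary projection `I - P_V` kills `k` and scales `B y` by `c`, while the span of `𝒱`
together with `c • B y + k` does not see `k` or `c`. -/

theorem Submodule.sup_span_singleton_smul_add_of_mem {R M : Type*} [Ring R] [AddCommGroup M]
    [Module R M] {K : Submodule R M} {c : R} (hc : IsUnit c) (v : M) {k : M} (hk : k ∈ K) :
    K ⊔ R ∙ (c • v + k) = K ⊔ R ∙ v := by
  have mem_sup_of_add_mem {w k : M} (hk : k ∈ K) : w + k ∈ K ⊔ R ∙ w :=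
    add_mem (mem_sup_right (mem_span_singleton_self w)) (mem_sup_left hk)
  have add_sup_eq {w k : M} (hk : k ∈ K) : K ⊔ R ∙ (w + k) = K ⊔ R ∙ w := by
    refine le_antisymm (sup_le le_sup_left ?_) (sup_le le_sup_left ?_) <;>
      rw [span_singleton_le_iff_mem]
    · exact mem_sup_of_add_mem hk
    · simpa using mem_sup_of_add_mem (w := w + k) (neg_mem hk)
  rw [add_sup_eq hk, span_singleton_smul_eq hc]

theorem Submodule.smul_add_sub_starProjection_of_mem {𝕜 E : Type*} [RCLike 𝕜]
    [NormedAddCommGroup E] [InnerProductSpace 𝕜 E] (K : Submodule 𝕜 E) [K.HasOrthogonalProjection]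
    (c : 𝕜) (v : E) {k : E} (hk : k ∈ K) :
    c • v + k - K.starProjection (c • v + k) = c • (v - K.starProjection v) := by
  rw [map_add, map_smul, starProjection_eq_self_iff.mpr hk, smul_sub, add_sub_add_right_eq_sub]

theorem sira_jd_same_expansion_general {E : Type*} [NormedAddCommGroup E] [InnerProductSpace ℂ E]
    [FiniteDimensional ℂ E]
    (B : E →L[ℂ] E) (σ ν : ℂ)
    (hσν : σ ≠ ν)
    (K : Submodule ℂ E) (y : E) (hyK : y ∈ K)
    (hyBy : ⟪y, B y⟫ ≠ 0)
    (uS uJ : E)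
    (huS : uS = (σ - ν) • B y + y)
    (huJ : uJ = (⟪y, B y⟫)⁻¹ • B y - y) :
    (B y - (Submodule.orthogonalProjectionOnto K (B y) : E)
        = (σ - ν)⁻¹ • (uS - (Submodule.orthogonalProjectionOnto K uS : E))
      ∧ B y - (Submodule.orthogonalProjectionOnto K (B y) : E)
        = ⟪y, B y⟫ • (uJ - (Submodule.orthogonalProjectionOnto K uJ : E)))
    ∧ (B y - (Submodule.orthogonalProjectionOnto K (B y) : E) ≠ 0 →
        K ⊔ Submodule.span ℂ {uS} = K ⊔ Submodule.span ℂ {uJ}) := by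
  have hσν' : σ - ν ≠ 0 := sub_ne_zero.mpr hσν
  rw [sub_eq_add_neg] at huJ
  subst huS huJ
  simp only [← Submodule.starProjection_apply]
  refine ⟨⟨?_, ?_⟩, fun _ => ?_⟩
  · rw [K.smul_add_sub_starProjection_of_mem _ _ hyK, inv_smul_smul₀ hσν']
  · rw [K.smul_add_sub_starProjection_of_mem _ _ (neg_mem hyK), smul_inv_smul₀ hyBy]
  · rw [Submodule.sup_span_singleton_smul_add_of_mem hσν'.isUnit _ hyK,
      Submodule.sup_span_singleton_smul_add_of_mem (inv_ne_zero hyBy).isUnit _ (neg_mem hyK)]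

/-- the projections of `u_S` and `u_J` onto the orthogonal complement of a
subspace `𝒱 ∋ y` are proportional:
`(I - P_V) B y = (1/(σ-ν)) (I - P_V) u_S = (1/γ) (I - P_V) u_J` with `γ = 1/(yᴴBy)`;
consequently `span(𝒱 ∪ {u_S}) = span(𝒱 ∪ {u_J})` whenever `(I - P_V) B y ≠ 0`. -/
theorem sira_jd_same_expansion {E : Type*} [NormedAddCommGroup E] [InnerProductSpace ℂ E]
    [FiniteDimensional ℂ E]
    (A B : E →L[ℂ] E) (σ ν : ℂ)
    (hBA : B * (A - σ • 1) = 1) (hAB : (A - σ • 1) * B = 1)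
    (hσν : σ ≠ ν)
    (K : Submodule ℂ E) (y : E) (hyK : y ∈ K) (hy : ‖y‖ = 1)
    (hyBy : ⟪y, B y⟫ ≠ 0)
    (uS uJ : E)
    (huS : uS = (σ - ν) • B y + y)
    (huJ : uJ = (⟪y, B y⟫)⁻¹ • B y - y) :
    (B y - (Submodule.orthogonalProjectionOnto K (B y) : E)
        = (σ - ν)⁻¹ • (uS - (Submodule.orthogonalProjectionOnto K uS : E))
      ∧ B y - (Submodule.orthogonalProjectionOnto K (B y) : E)
        = ⟪y, B y⟫ • (uJ - (Submodule.orthogonalProjectionOnto K uJ : E)))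
    ∧ (B y - (Submodule.orthogonalProjectionOnto K (B y) : E) ≠ 0 →
        K ⊔ Submodule.span ℂ {uS} = K ⊔ Submodule.span ℂ {uJ}) :=
  sira_jd_same_expansion_general B σ ν hσν K y hyK hyBy uS uJ huS huJ
end

section
/- Let u, ũ ∈ ℂ^n with u ≠ 0, ε = ‖ũ - u‖/‖u‖, and write ũ = u + ε‖u‖f with ‖f‖ = 1 (when ũ ≠ u). Let P_V be an orthogonal projector and set f_⊥ = (I - P_V)f. If (I - P_V)u ≠ 0 and (I - P_V)ũ ≠ 0, and ṽ = (I - P_V)ũ/‖(I - P_V)ũ‖, v = (I - P_V)u/‖(I - P_V)u‖, and ε̃ = ‖(I-P_V)ũ - (I-P_V)u‖/‖(I-P_V)u‖, then sin∠(ṽ, v) = ε̃ · sin∠(ṽ, f_⊥), where for nonzero vectors a, b, sin∠(a,b) = ‖(I - bb^H/‖b‖²) a‖/‖a‖. -/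
local notation "⟪" x ", " y "⟫" => @inner ℂ _ _ x y

/-- `sin∠(a, b) = ‖(I - bbᴴ/‖b‖²) a‖ / ‖a‖` for vectors `a, b`. -/
noncomputable def sinAngle {E : Type*} [NormedAddCommGroup E] [InnerProductSpace ℂ E]
    (a b : E) : ℝ :=
  ‖a - (⟪b, a⟫ / ((‖b‖ : ℂ) ^ 2)) • b‖ / ‖a‖

/-!
`‖a‖ ‖b‖ sin∠(a, b)` is the area `√(‖a‖² ‖b‖² - |⟪a, b⟫|²)` of the parallelogram spanned by `a`
and `b`, which is unchanged when `b` is replaced by `a - b`. Take `a = (I - P_V) ũ` and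
`b = (I - P_V) u`: by linearity of `I - P_V`, `f_⊥` is a nonzero multiple of `a - b`, and `sin∠`
is invariant under nonzero rescaling of either argument.
-/

section

variable {E : Type*} [NormedAddCommGroup E] [InnerProductSpace ℂ E]

noncomputable def gramDet (a b : E) : ℝ := ‖a‖ ^ 2 * ‖b‖ ^ 2 - ‖⟪a, b⟫‖ ^ 2

lemma gramDet_self_sub (a b : E) : gramDet a (a - b) = gramDet a b := by
  have hinner : ⟪a, a - b⟫ = (‖a‖ : ℂ) ^ 2 - ⟪a, b⟫ := by
    rw [inner_sub_right, inner_self_eq_norm_sq_to_K]; rfl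
  have hsq (z : ℂ) : ‖z‖ ^ 2 = z.re ^ 2 + z.im ^ 2 := by
    rw [Complex.sq_norm, Complex.normSq_apply]; ring
  have hre : RCLike.re ⟪a, b⟫ = (⟪a, b⟫).re := rfl
  unfold gramDet
  rw [@norm_sub_sq ℂ, hinner, hsq, hsq, hre]
  simp only [Complex.sub_re, Complex.sub_im, ← Complex.ofReal_pow, Complex.ofReal_re,
    Complex.ofReal_im]
  ring

lemma sq_norm_mul_sq_norm_sub_proj_eq_gramDet (a b : E) :
    ‖b‖ ^ 2 * ‖a - (⟪b, a⟫ / ((‖b‖ : ℂ) ^ 2)) • b‖ ^ 2 = gramDet b a := by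
  rcases eq_or_ne b 0 with rfl | hb
  · simp [gramDet]
  have hb' : (‖b‖ : ℂ) ≠ 0 := by simpa using hb
  apply Complex.ofReal_injective
  unfold gramDet
  push_cast
  have hself (x : E) : (‖x‖ : ℂ) ^ 2 = ⟪x, x⟫ := (inner_self_eq_norm_sq_to_K x).symm
  rw [hself (a - _), ← Complex.conj_mul']
  simp only [inner_sub_left, inner_sub_right, inner_smul_left, inner_smul_right,
    ← inner_conj_symm a b, map_div₀, map_pow, Complex.conj_ofReal]
  simp only [← hself]
  field_simp
  ring

lemma gramDet_comm (a b : E) : gramDet a b = gramDet b a := by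
  rw [gramDet, gramDet, norm_inner_symm, mul_comm]

lemma sinAngle_mul_norm (a b : E) : sinAngle a b * ‖b‖ = √(gramDet a b) / ‖a‖ := by
  rw [gramDet_comm, ← sq_norm_mul_sq_norm_sub_proj_eq_gramDet, ← mul_pow,
    Real.sqrt_sq (by positivity), sinAngle]
  ring

lemma sinAngle_sub_mul_norm (a b : E) : sinAngle a (a - b) * ‖a - b‖ = sinAngle a b * ‖b‖ := by
  rw [sinAngle_mul_norm, sinAngle_mul_norm, gramDet_self_sub]

lemma sinAngle_eq_div_mul_sinAngle_sub (a : E) {b : E} (hb : b ≠ 0) :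
    sinAngle a b = ‖a - b‖ / ‖b‖ * sinAngle a (a - b) := by
  rw [div_mul_eq_mul_div, mul_comm, sinAngle_sub_mul_norm,
    mul_div_cancel_right₀ _ (norm_ne_zero_iff.mpr hb)]

lemma sinAngle_smul_left (a b : E) {c : ℂ} (hc : c ≠ 0) : sinAngle (c • a) b = sinAngle a b := by
  rw [sinAngle, sinAngle, inner_smul_right, mul_div_assoc, mul_smul, ← smul_sub, norm_smul,
    norm_smul, mul_div_mul_left _ _ (norm_ne_zero_iff.mpr hc)]

lemma sinAngle_smul_right (a b : E) {c : ℂ} (hc : c ≠ 0) : sinAngle a (c • b) = sinAngle a b := by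
  have hc' : starRingEnd ℂ c ≠ 0 := (map_ne_zero _).mpr hc
  rw [sinAngle, sinAngle, inner_smul_left, norm_smul, smul_smul, Complex.ofReal_mul, mul_pow,
    ← Complex.conj_mul' c]
  congr 4
  field_simp

end

theorem sin_tv_v_eq_teps_sin_tv_fperp_general {E : Type*} [NormedAddCommGroup E]
    [InnerProductSpace ℂ E] [FiniteDimensional ℂ E]
    (K : Submodule ℂ E) (u ut f : E) (hne : ut ≠ u)
    (hf : f = ‖ut - u‖⁻¹ • (ut - u))
    (hPu : u - (K.orthogonalProjection u : E) ≠ 0)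
    (hPut : ut - (K.orthogonalProjection ut : E) ≠ 0)
    (εt : ℝ)
    (hεt : εt = ‖(ut - (K.orthogonalProjection ut : E))
                  - (u - (K.orthogonalProjection u : E))‖
                / ‖u - (K.orthogonalProjection u : E)‖)
    (vt v : E)
    (hvt : vt = ‖ut - (K.orthogonalProjection ut : E)‖⁻¹
                  • (ut - (K.orthogonalProjection ut : E)))
    (hv : v = ‖u - (K.orthogonalProjection u : E)‖⁻¹
                  • (u - (K.orthogonalProjection u : E))) :
    sinAngle vt v = εt * sinAngle vt (f - (K.orthogonalProjection f : E)) := by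
  have hfperp : f - (K.orthogonalProjection f : E) = ‖ut - u‖⁻¹ •
      ((ut - (K.orthogonalProjection ut : E)) - (u - (K.orthogonalProjection u : E))) := by
    rw [hf, LinearMapClass.map_smul_of_tower, Submodule.coe_smul_of_tower, map_sub,
      Submodule.coe_sub]
    module
  have inv_norm_ne_zero {x : E} (hx : x ≠ 0) : ((‖x‖⁻¹ : ℝ) : ℂ) ≠ 0 := by simpa using hx
  subst hvt hv hεt
  simp only [hfperp, ← Complex.coe_smul]
  rw [sinAngle_smul_left _ _ (inv_norm_ne_zero hPut),
    sinAngle_smul_right _ _ (inv_norm_ne_zero hPu), sinAngle_smul_left _ _ (inv_norm_ne_zero hPut),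
    sinAngle_smul_right _ _ (inv_norm_ne_zero (sub_ne_zero.mpr hne))]
  exact sinAngle_eq_div_mul_sinAngle_sub _ hPu

/-- Lemma 1: `sin∠(ṽ, v) = ε̃ · sin∠(ṽ, f_⊥)`. -/
theorem sin_tv_v_eq_teps_sin_tv_fperp {E : Type*} [NormedAddCommGroup E]
    [InnerProductSpace ℂ E] [FiniteDimensional ℂ E]
    (K : Submodule ℂ E) (u ut f : E) (hu : u ≠ 0) (hne : ut ≠ u)
    (hf : f = ‖ut - u‖⁻¹ • (ut - u)) (hfnorm : ‖f‖ = 1)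
    (hPu : u - (K.orthogonalProjection u : E) ≠ 0)
    (hPut : ut - (K.orthogonalProjection ut : E) ≠ 0)
    (ε εt : ℝ)
    (hε : ε = ‖ut - u‖ / ‖u‖)
    (hεt : εt = ‖(ut - (K.orthogonalProjection ut : E))
                  - (u - (K.orthogonalProjection u : E))‖
                / ‖u - (K.orthogonalProjection u : E)‖)
    (vt v : E)
    (hvt : vt = ‖ut - (K.orthogonalProjection ut : E)‖⁻¹
                  • (ut - (K.orthogonalProjection ut : E)))
    (hv : v = ‖u - (K.orthogonalProjection u : E)‖⁻¹
                  • (u - (K.orthogonalProjection u : E))) :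
    sinAngle vt v = εt * sinAngle vt (f - (K.orthogonalProjection f : E)) :=
  sin_tv_v_eq_teps_sin_tv_fperp_general K u ut f hne hf hPu hPut εt hεt vt v hvt hv
end

section
/- Under the hypotheses of the previous identity together with the eigenpair decomposition bound ‖(I - P_V) B y‖ ≤ 2‖B‖ sin∠(y, x), the relative error ε of the approximate solution satisfies ε ≤ [2 ‖B‖ sin∠(y, x) / (‖B y - α y‖ · sin∠(𝒱, f))] · ε̃. -/
/-! With `Q = I - P_𝒱` we have `Q y = 0`, so `Q u = a₁ Q(By)` while `u = a₁ (By - αy)`; splitting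
`y` along the eigenvector `x` gives `‖Q(By)‖ ≤ 2‖B‖ sin∠(y,x)`. As `ũ - u = ‖ũ - u‖ f`, the ratio
`ε / ε̃` equals `‖Q u‖ / (‖u‖ ‖Q f‖) = ‖Q(By)‖ / (‖By - αy‖ ‖Q f‖)`, and the bound follows. -/

local notation "⟪" x ", " y "⟫" => @inner ℂ _ _ x y

open Submodule

theorem norm_map_eq_norm_mul_norm_map_normalize {𝕜 E F : Type*} [RCLike 𝕜]
    [NormedAddCommGroup E] [NormedSpace 𝕜 E] [NormedSpace ℝ E] [IsScalarTower ℝ 𝕜 E]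
    [NormedAddCommGroup F] [NormedSpace 𝕜 F] [NormedSpace ℝ F] [IsScalarTower ℝ 𝕜 F]
    (T : E →L[𝕜] F) (d : E) : ‖T d‖ = ‖d‖ * ‖T (‖d‖⁻¹ • d)‖ := by
  rcases eq_or_ne d 0 with rfl | hd
  · simp
  · rw [T.map_smul_of_tower, norm_smul, norm_inv, norm_norm,
      mul_inv_cancel_left₀ (norm_ne_zero_iff.mpr hd)]

theorem smul_sub_neg_div_smul {𝕜 M : Type*} [Field 𝕜] [AddCommGroup M] [Module 𝕜 M]
    {a₁ : 𝕜} (ha₁ : a₁ ≠ 0) (a₂ : 𝕜) (w y : M) :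
    a₁ • (w - (-(a₂ / a₁)) • y) = a₁ • w + a₂ • y := by
  rw [smul_sub, smul_smul, mul_neg, mul_div_cancel₀ a₂ ha₁, neg_smul, sub_neg_eq_add]

theorem norm_map_apply_near_eigenvector_le {𝕜 E : Type*} [RCLike 𝕜]
    [NormedAddCommGroup E] [NormedSpace 𝕜 E] {P B : E →L[𝕜] E} (hP : ‖P‖ ≤ 1)
    {μ c : 𝕜} {x g : E} {s : ℝ} (hBx : B x = μ • x) (hμ : ‖μ‖ ≤ ‖B‖) (hc : ‖c‖ ≤ 1)
    (hg : ‖g‖ ≤ 1) (hPx : ‖P x‖ ≤ s) :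
    ‖P (B (c • x + (s : 𝕜) • g))‖ ≤ 2 * ‖B‖ * s := by
  have hs : 0 ≤ s := (norm_nonneg _).trans hPx
  have hPBg : ‖P (B g)‖ ≤ ‖B‖ :=
    calc ‖P (B g)‖ ≤ ‖P‖ * (‖B‖ * ‖g‖) := P.le_of_opNorm_le_of_le le_rfl (B.le_opNorm g)
      _ ≤ 1 * (‖B‖ * 1) := by gcongr
      _ = ‖B‖ := by ring
  have hcμ : ‖c * μ‖ ≤ ‖B‖ := by
    simpa [norm_mul] using mul_le_mul hc hμ (norm_nonneg μ) zero_le_one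
  calc ‖P (B (c • x + (s : 𝕜) • g))‖ = ‖(c * μ) • P x + (s : 𝕜) • P (B g)‖ := by
        simp only [map_add, map_smul, hBx, smul_smul]
    _ ≤ ‖c * μ‖ * ‖P x‖ + s * ‖P (B g)‖ := by
        refine (norm_add_le _ _).trans_eq ?_
        rw [norm_smul, norm_smul, RCLike.norm_ofReal, abs_of_nonneg hs]
    _ ≤ ‖B‖ * s + s * ‖B‖ := by gcongr
    _ = 2 * ‖B‖ * s := by ring

theorem eps_le_teps_bound_general {E : Type*} [NormedAddCommGroup E] [InnerProductSpace ℂ E]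
    [FiniteDimensional ℂ E]
    (B : E →L[ℂ] E) (lam σ : ℂ)
    (x : E) (hBx : B x = (lam - σ)⁻¹ • x)
    (hB : 1 / ‖lam - σ‖ ≤ ‖B‖)
    (K : Submodule ℂ E)
    (y g : E) (hyK : y ∈ K) (hg : ‖g‖ = 1)
    (c : ℂ) (s : ℝ) (hc : ‖c‖ ≤ 1)
    (hdecomp : y = c • x + (s : ℂ) • g)
    (hsV : ‖x - (Submodule.orthogonalProjectionOnto K x : E)‖ ≤ s)
    (a1 a2 : ℂ) (ha1 : a1 ≠ 0)
    (u ut f : E) (hu : u = a1 • B y + a2 • y)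
    (hPu : u - (Submodule.orthogonalProjectionOnto K u : E) ≠ 0)
    (hf : f = ‖ut - u‖⁻¹ • (ut - u))
    (hfperp : ‖f - (Submodule.orthogonalProjectionOnto K f : E)‖ ≠ 0)
    (ε εt : ℝ)
    (hε : ε = ‖ut - u‖ / ‖u‖)
    (hεt : εt = ‖(ut - u) - (Submodule.orthogonalProjectionOnto K (ut - u) : E)‖
                / ‖u - (Submodule.orthogonalProjectionOnto K u : E)‖) :
    ε ≤ 2 * ‖B‖ * s
        / (‖B y - (-(a2 / a1)) • y‖ * ‖f - (Submodule.orthogonalProjectionOnto K f : E)‖) * εt := by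
  simp only [← starProjection_apply, ← starProjection_orthogonal_val] at hsV hPu hfperp hεt ⊢
  set Q := Kᗮ.starProjection
  have hQBy : ‖Q (B y)‖ ≤ 2 * ‖B‖ * s := by
    rw [hdecomp]
    refine norm_map_apply_near_eigenvector_le (starProjection_norm_le _) hBx ?_ hc hg.le hsV
    rwa [norm_inv, ← one_div]
  have hQu : ‖Q u‖ = ‖a1‖ * ‖Q (B y)‖ := by
    rw [hu, map_add, map_smul, map_smul, starProjection_orthogonal_apply_eq_zero hyK, smul_zero,
      add_zero, norm_smul]
  have hnu : ‖u‖ = ‖a1‖ * ‖B y - (-(a2 / a1)) • y‖ := by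
    rw [← norm_smul, smul_sub_neg_div_smul ha1, hu]
  have hQd : ‖Q (ut - u)‖ = ‖ut - u‖ * ‖Q f‖ := by
    rw [hf, ← norm_map_eq_norm_mul_norm_map_normalize]
  have hQu_pos : 0 < ‖a1‖ * ‖Q (B y)‖ := hQu ▸ norm_pos_iff.mpr hPu
  rw [hε, hεt, hQd, hQu, hnu]
  calc ‖ut - u‖ / (‖a1‖ * ‖B y - (-(a2 / a1)) • y‖)
      ≤ ‖ut - u‖ / (‖a1‖ * ‖B y - (-(a2 / a1)) • y‖) * (2 * ‖B‖ * s / ‖Q (B y)‖) := by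
        refine le_mul_of_one_le_right (by positivity) ?_
        rwa [one_le_div (pos_of_mul_pos_right hQu_pos (norm_nonneg _))]
    _ = _ := by field_simp

/-- Theorem 2: `ε ≤ [2‖B‖ sin∠(y,x) / (‖By - αy‖ · sin∠(𝒱,f))] · ε̃`. -/
theorem eps_le_teps_bound {E : Type*} [NormedAddCommGroup E] [InnerProductSpace ℂ E]
    [FiniteDimensional ℂ E]
    (B : E →L[ℂ] E) (lam σ : ℂ) (hlam : lam ≠ σ)
    (x : E) (hx : ‖x‖ = 1) (hBx : B x = (lam - σ)⁻¹ • x)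
    (hB : 1 / ‖lam - σ‖ ≤ ‖B‖)
    (K : Submodule ℂ E)
    (y g : E) (hyK : y ∈ K) (hy : ‖y‖ = 1) (hg : ‖g‖ = 1) (hxg : ⟪x, g⟫ = 0)
    (c : ℂ) (s : ℝ) (hs : 0 ≤ s) (hc : ‖c‖ ≤ 1)
    (hdecomp : y = c • x + (s : ℂ) • g)
    (hsV : ‖x - (Submodule.orthogonalProjectionOnto K x : E)‖ ≤ s)
    (a1 a2 : ℂ) (ha1 : a1 ≠ 0)
    (u ut f : E) (hu : u = a1 • B y + a2 • y) (hune : u ≠ 0)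
    (hPu : u - (Submodule.orthogonalProjectionOnto K u : E) ≠ 0)
    (hBy : B y - (-(a2 / a1)) • y ≠ 0)
    (hne : ut ≠ u) (hf : f = ‖ut - u‖⁻¹ • (ut - u))
    (hfperp : ‖f - (Submodule.orthogonalProjectionOnto K f : E)‖ ≠ 0)
    (ε εt : ℝ)
    (hε : ε = ‖ut - u‖ / ‖u‖)
    (hεt : εt = ‖(ut - u) - (Submodule.orthogonalProjectionOnto K (ut - u) : E)‖
                / ‖u - (Submodule.orthogonalProjectionOnto K u : E)‖) :
    ε ≤ 2 * ‖B‖ * s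
        / (‖B y - (-(a2 / a1)) • y‖ * ‖f - (Submodule.orthogonalProjectionOnto K f : E)‖) * εt :=
  eps_le_teps_bound_general B lam σ x hBx hB K y g hyK hg c s hc hdecomp hsV a1 a2 ha1 u ut f hu hPu
    hf hfperp ε εt hε hεt
end

section
/- Let B ∈ ℂ^{n×n} with simple eigenpair (μ, x), ‖x‖ = 1, (x, X_⊥) unitary, L = X_⊥^H B X_⊥. Let (α, y) with ‖y‖ = 1 be an approximate eigenpair such that α is not an eigenvalue of L, and define sep(α, L) = ‖(L - αI)^{-1}‖^{-1}. Then sin∠(y, x) ≤ ‖B y - α y‖ / sep(α, L), where sin∠(y,x) = ‖X_⊥^H y‖. -/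
local notation "⟪" x ", " y "⟫" => @inner ℂ _ _ x y

/-!
Let `P` be the orthogonal projection onto `xᗮ`. Since `x` is an eigenvector, `B` maps `span {x}`
into itself, so `P (B y) = P (B (P y)) = L (P y)` and hence `P (B y - α y) = (L - α) (P y)`.
Therefore `P y = (L - α)⁻¹ P (B y - α y)`, and `P` is a contraction.
-/

namespace Submodule

variable {𝕜 E : Type*} [RCLike 𝕜] [NormedAddCommGroup E] [InnerProductSpace 𝕜 E]
  {K : Submodule 𝕜 E} [K.HasOrthogonalProjection] {B : E →L[𝕜] E}

theorem orthogonalProjectionOnto_orthogonal_apply_map_eq (hB : ∀ v ∈ K, B v ∈ K) (v : E) :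
    Kᗮ.orthogonalProjectionOnto (B v) = Kᗮ.orthogonalProjectionOnto (B (Kᗮ.starProjection v)) := by
  have hK : Kᗮ.orthogonalProjectionOnto (B (K.starProjection v)) = 0 :=
    orthogonalProjectionOnto_apply_of_mem_orthogonal <|
      K.le_orthogonal_orthogonal <| hB _ (K.starProjection_apply_mem v)
  conv_lhs => rw [← K.starProjection_add_starProjection_orthogonal v]
  rw [map_add, map_add, hK, zero_add]

variable {L : Kᗮ →L[𝕜] Kᗮ}

theorem compression_sub_smul_apply_orthogonalProjectionOnto (hB : ∀ v ∈ K, B v ∈ K)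
    (hL : ∀ w : Kᗮ, L w = Kᗮ.orthogonalProjectionOnto (B w)) (α : 𝕜) (v : E) :
    (L - α • 1) (Kᗮ.orthogonalProjectionOnto v) = Kᗮ.orthogonalProjectionOnto (B v - α • v) := by
  rw [map_sub, map_smul, orthogonalProjectionOnto_orthogonal_apply_map_eq hB,
    sub_apply, hL]
  rfl

theorem norm_orthogonalProjectionOnto_orthogonal_le (hB : ∀ v ∈ K, B v ∈ K)
    (hL : ∀ w : Kᗮ, L w = Kᗮ.orthogonalProjectionOnto (B w)) {α : 𝕜} {M : Kᗮ →L[𝕜] Kᗮ}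
    (hML : M * (L - α • 1) = 1) (v : E) :
    ‖Kᗮ.orthogonalProjectionOnto v‖ ≤ ‖M‖ * ‖B v - α • v‖ := by
  have hv : Kᗮ.orthogonalProjectionOnto v = M (Kᗮ.orthogonalProjectionOnto (B v - α • v)) := by
    rw [← compression_sub_smul_apply_orthogonalProjectionOnto hB hL, ← mul_apply_eq_comp,
      hML, one_apply_eq_self]
  calc ‖Kᗮ.orthogonalProjectionOnto v‖
      ≤ ‖M‖ * ‖Kᗮ.orthogonalProjectionOnto (B v - α • v)‖ := hv ▸ M.le_opNorm _
    _ ≤ ‖M‖ * ‖B v - α • v‖ := by gcongr; exact norm_orthogonalProjectionOnto_apply_le _ _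

end Submodule

/-- `sep(α, L) = ‖(L - α)⁻¹‖⁻¹` is encoded as `‖M‖⁻¹` for a left inverse `M` of `L - α • 1`. -/
theorem sin_y_x_le_residual_div_sep_general {E : Type*} [NormedAddCommGroup E]
    [InnerProductSpace ℂ E]
    (B : E →L[ℂ] E) (μ : ℂ) (x : E) (hx : ‖x‖ = 1) (hBx : B x = μ • x)
    (α : ℂ) (y : E)
    (L M : (Submodule.span ℂ {x})ᗮ →L[ℂ] (Submodule.span ℂ {x})ᗮ)
    (hL : ∀ w : (Submodule.span ℂ {x})ᗮ,
        L w = Submodule.orthogonalProjectionOnto (Submodule.span ℂ {x})ᗮ (B w))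
    (hML : M * (L - α • 1) = 1) :
    ‖y - ⟪x, y⟫ • x‖ ≤ ‖B y - α • y‖ / ‖M‖⁻¹ := by
  have hB : ∀ v ∈ Submodule.span ℂ {x}, B v ∈ Submodule.span ℂ {x} := by
    intro v hv
    obtain ⟨c, rfl⟩ := Submodule.mem_span_singleton.mp hv
    rw [map_smul, hBx, smul_smul]
    exact Submodule.smul_mem _ _ (Submodule.mem_span_singleton_self x)
  have hy : y - ⟪x, y⟫ • x = (Submodule.span ℂ {x})ᗮ.orthogonalProjectionOnto y := by
    rw [Submodule.orthogonalProjectionOnto_orthogonal, Submodule.coe_mk,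
      Submodule.starProjection_unit_singleton ℂ hx y]
  rw [hy, div_inv_eq_mul, mul_comm]
  exact Submodule.norm_orthogonalProjectionOnto_orthogonal_le hB hL hML y

/-- Lemma 2: if `(μ, x)` is a unit eigenpair of `B`, `L` is the compression
of `B` to the orthogonal complement of `x`, and `α` is not an eigenvalue of `L`
(witnessed by a two-sided inverse `M` of `L - αI`, so `sep(α,L) = ‖M‖⁻¹`), then for any
unit vector `y`: `sin∠(y, x) = ‖(I - xxᴴ)y‖ ≤ ‖By - αy‖ / sep(α, L)`. -/
theorem sin_y_x_le_residual_div_sep {E : Type*} [NormedAddCommGroup E]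
    [InnerProductSpace ℂ E] [FiniteDimensional ℂ E]
    (B : E →L[ℂ] E) (μ : ℂ) (x : E) (hx : ‖x‖ = 1) (hBx : B x = μ • x)
    (α : ℂ) (y : E) (hy : ‖y‖ = 1)
    (L M : (Submodule.span ℂ {x})ᗮ →L[ℂ] (Submodule.span ℂ {x})ᗮ)
    (hL : ∀ w : (Submodule.span ℂ {x})ᗮ,
        L w = Submodule.orthogonalProjectionOnto (Submodule.span ℂ {x})ᗮ (B w))
    (hLM : (L - α • 1) * M = 1) (hML : M * (L - α • 1) = 1) :
    ‖y - ⟪x, y⟫ • x‖ ≤ ‖B y - α • y‖ / ‖M‖⁻¹ :=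
  sin_y_x_le_residual_div_sep_general B μ x hx hBx α y L M hL hML
end

section
/- Combining the previous bounds: with u = α₁By + α₂y, α = -α₂/α₁ not an eigenvalue of L = X_⊥^H B X_⊥, the relative error of the approximate inner solution satisfies ε ≤ [2‖B‖ / (sep(α, L) · sin∠(𝒱, f))] · ε̃. -/
local notation "⟪" x ", " y "⟫" => @inner ℂ _ _ x y

/-! Let `P` be the orthogonal projection onto `𝒱`. Since `y ∈ 𝒱`, `(I - P) u = α₁ (I - P) B y`, and
splitting `B y = c (λ - σ)⁻¹ x + s B g` bounds it by `2 |α₁| ‖B‖ s`. Projecting onto `x⊥` instead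
gives `α₁ s (L - α) g`, so `‖u‖ ≥ |α₁| s sep(α, L)`. Hence `‖(I - P) u‖ ≤ 2 ‖B‖ ‖u‖ / sep(α, L)`,
and `‖(I - P)(ũ - u)‖ = ‖ũ - u‖ sin∠(𝒱, f)` turns this into the bound on `ε / ε̃`. -/

open Submodule

section

variable {𝕜 E : Type*} [RCLike 𝕜] [NormedAddCommGroup E] [InnerProductSpace 𝕜 E]

theorem ContinuousLinearMap.norm_le_opNorm_mul_norm_of_mul_eq_one {T M : E →L[𝕜] E}
    (hMT : M * T = 1) (v : E) : ‖v‖ ≤ ‖M‖ * ‖T v‖ :=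
  calc ‖v‖ = ‖M (T v)‖ := by rw [← mul_apply_eq_comp, hMT, one_apply_eq_self]
    _ ≤ ‖M‖ * ‖T v‖ := M.le_opNorm _

namespace Submodule

variable (K : Submodule 𝕜 E) [K.HasOrthogonalProjection]

theorem norm_sub_starProjection_le (v : E) : ‖v - K.starProjection v‖ ≤ ‖v‖ := by
  rw [← starProjection_orthogonal_val]
  exact Kᗮ.norm_starProjection_apply_le v

theorem sub_starProjection_smul_add_smul_of_mem {y : E} (hy : y ∈ K) (a b : 𝕜) (z : E) :
    a • z + b • y - K.starProjection (a • z + b • y) = a • (z - K.starProjection z) := by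
  rw [map_add, map_smul, map_smul, starProjection_eq_self_iff.mpr hy]
  module

theorem norm_sub_starProjection_eq_norm_mul [NormedSpace ℝ E] [IsScalarTower ℝ 𝕜 E] {w : E}
    (hw : w ≠ 0) :
    ‖w - K.starProjection w‖ = ‖w‖ * ‖‖w‖⁻¹ • w - K.starProjection (‖w‖⁻¹ • w)‖ := by
  rw [ContinuousLinearMap.map_smul_of_tower, ← smul_sub, norm_smul, norm_inv, norm_norm,
    mul_inv_cancel_left₀ (norm_ne_zero_iff.mpr hw)]

theorem norm_sub_starProjection_apply_le_two_mul {B : E →L[𝕜] E} {x g y : E} {μ c t : 𝕜}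
    (hBx : B x = μ • x) (hcμ : ‖c * μ‖ ≤ ‖B‖) (hg : ‖g‖ = 1) (hy : y = c • x + t • g)
    (hxK : ‖x - K.starProjection x‖ ≤ ‖t‖) :
    ‖B y - K.starProjection (B y)‖ ≤ 2 * ‖B‖ * ‖t‖ := by
  have hsplit : B y - K.starProjection (B y)
      = (c * μ) • (x - K.starProjection x) + t • (B g - K.starProjection (B g)) := by
    rw [hy, map_add, map_smul, map_smul, hBx, smul_smul, map_add, map_smul, map_smul]
    module
  have hBg : ‖B g - K.starProjection (B g)‖ ≤ ‖B‖ :=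
    (K.norm_sub_starProjection_le _).trans ((B.le_opNorm g).trans_eq (by rw [hg, mul_one]))
  calc ‖B y - K.starProjection (B y)‖
      ≤ ‖c * μ‖ * ‖x - K.starProjection x‖ + ‖t‖ * ‖B g - K.starProjection (B g)‖ := by
        rw [hsplit, ← norm_smul, ← norm_smul]; exact norm_add_le _ _
    _ ≤ ‖B‖ * ‖t‖ + ‖t‖ * ‖B‖ := by gcongr
    _ = 2 * ‖B‖ * ‖t‖ := by ring

end Submodule

theorem orthogonalProjectionOnto_span_singleton_orthogonal_apply {x g : E}
    (hg : g ∈ (𝕜 ∙ x)ᗮ) (c t : 𝕜) :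
    (𝕜 ∙ x)ᗮ.orthogonalProjectionOnto (c • x + t • g) = t • ⟨g, hg⟩ := by
  rw [map_add, map_smul, map_smul, orthogonalProjectionOnto_orthogonalComplement_singleton_eq_zero,
    smul_zero, zero_add, orthogonalProjectionOnto_mem_subspace_eq_self ⟨g, hg⟩]

variable {B : E →L[𝕜] E} {x g y : E} {μ c t a₁ a₂ : 𝕜} {L M : (𝕜 ∙ x)ᗮ →L[𝕜] (𝕜 ∙ x)ᗮ}

theorem orthogonalProjectionOnto_smul_apply_add_smul_eq (hBx : B x = μ • x) (hg : g ∈ (𝕜 ∙ x)ᗮ)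
    (hy : y = c • x + t • g) (ha₁ : a₁ ≠ 0)
    (hL : ∀ w : (𝕜 ∙ x)ᗮ, L w = (𝕜 ∙ x)ᗮ.orthogonalProjectionOnto (B w)) :
    (𝕜 ∙ x)ᗮ.orthogonalProjectionOnto (a₁ • B y + a₂ • y)
      = (a₁ * t) • (L - (-(a₂ / a₁)) • 1) ⟨g, hg⟩ := by
  have hPBg : (𝕜 ∙ x)ᗮ.orthogonalProjectionOnto (B g) = L ⟨g, hg⟩ := (hL ⟨g, hg⟩).symm
  rw [map_add, map_smul, map_smul, hy, orthogonalProjectionOnto_span_singleton_orthogonal_apply hg]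
  simp only [map_add, map_smul, hBx, hPBg,
    orthogonalProjectionOnto_orthogonalComplement_singleton_eq_zero, smul_zero, zero_add,
    sub_apply, smul_apply, one_apply_eq_self]
  match_scalars
  · simp
  · field_simp

theorem norm_mul_norm_le_opNorm_mul_norm_smul_apply_add_smul (hBx : B x = μ • x)
    (hg : g ∈ (𝕜 ∙ x)ᗮ) (hg₁ : ‖g‖ = 1) (hy : y = c • x + t • g) (ha₁ : a₁ ≠ 0)
    (hL : ∀ w : (𝕜 ∙ x)ᗮ, L w = (𝕜 ∙ x)ᗮ.orthogonalProjectionOnto (B w))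
    (hML : M * (L - (-(a₂ / a₁)) • 1) = 1) :
    ‖a₁‖ * ‖t‖ ≤ ‖M‖ * ‖a₁ • B y + a₂ • y‖ :=
  calc ‖a₁‖ * ‖t‖ = ‖a₁ * t‖ * ‖(⟨g, hg⟩ : (𝕜 ∙ x)ᗮ)‖ := by rw [norm_mul, coe_norm, hg₁, mul_one]
    _ ≤ ‖a₁ * t‖ * (‖M‖ * ‖(L - (-(a₂ / a₁)) • 1) ⟨g, hg⟩‖) := by
        gcongr; exact ContinuousLinearMap.norm_le_opNorm_mul_norm_of_mul_eq_one hML _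
    _ = ‖M‖ * ‖(𝕜 ∙ x)ᗮ.orthogonalProjectionOnto (a₁ • B y + a₂ • y)‖ := by
        rw [orthogonalProjectionOnto_smul_apply_add_smul_eq hBx hg hy ha₁ hL, norm_smul]; ring
    _ ≤ ‖M‖ * ‖a₁ • B y + a₂ • y‖ := by
        gcongr; exact norm_orthogonalProjectionOnto_apply_le _ _

theorem norm_sub_starProjection_smul_apply_add_smul_le (K : Submodule 𝕜 E)
    [K.HasOrthogonalProjection] (hBx : B x = μ • x) (hcμ : ‖c * μ‖ ≤ ‖B‖)
    (hg : g ∈ (𝕜 ∙ x)ᗮ) (hg₁ : ‖g‖ = 1) (hy : y = c • x + t • g) (hyK : y ∈ K)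
    (hxK : ‖x - K.starProjection x‖ ≤ ‖t‖) (ha₁ : a₁ ≠ 0)
    (hL : ∀ w : (𝕜 ∙ x)ᗮ, L w = (𝕜 ∙ x)ᗮ.orthogonalProjectionOnto (B w))
    (hML : M * (L - (-(a₂ / a₁)) • 1) = 1) :
    ‖a₁ • B y + a₂ • y - K.starProjection (a₁ • B y + a₂ • y)‖
      ≤ 2 * ‖B‖ * ‖M‖ * ‖a₁ • B y + a₂ • y‖ :=
  calc _ = ‖a₁‖ * ‖B y - K.starProjection (B y)‖ := by
        rw [K.sub_starProjection_smul_add_smul_of_mem hyK, norm_smul]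
    _ ≤ ‖a₁‖ * (2 * ‖B‖ * ‖t‖) := by
        gcongr; exact K.norm_sub_starProjection_apply_le_two_mul hBx hcμ hg₁ hy hxK
    _ = 2 * ‖B‖ * (‖a₁‖ * ‖t‖) := by ring
    _ ≤ 2 * ‖B‖ * (‖M‖ * ‖a₁ • B y + a₂ • y‖) := by
        gcongr ?_ * ?_
        exact norm_mul_norm_le_opNorm_mul_norm_smul_apply_add_smul hBx hg hg₁ hy ha₁ hL hML
    _ = 2 * ‖B‖ * ‖M‖ * ‖a₁ • B y + a₂ • y‖ := by ring

end

theorem eps_le_sep_bound_general {E : Type*} [NormedAddCommGroup E] [InnerProductSpace ℂ E]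
    [FiniteDimensional ℂ E]
    (B : E →L[ℂ] E) (lam σ : ℂ)
    (x : E) (hBx : B x = (lam - σ)⁻¹ • x)
    (hB : 1 / ‖lam - σ‖ ≤ ‖B‖)
    (K : Submodule ℂ E)
    (y g : E) (hyK : y ∈ K) (hg : ‖g‖ = 1) (hxg : ⟪x, g⟫ = 0)
    (c : ℂ) (s : ℝ) (hs : 0 ≤ s) (hc : ‖c‖ ≤ 1)
    (hdecomp : y = c • x + (s : ℂ) • g)
    (hsV : ‖x - (Submodule.orthogonalProjectionOnto K x : E)‖ ≤ s)
    (a1 a2 : ℂ) (ha1 : a1 ≠ 0)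
    (u ut f : E) (hu : u = a1 • B y + a2 • y)
    (hPu : u - (Submodule.orthogonalProjectionOnto K u : E) ≠ 0)
    (hne : ut ≠ u) (hf : f = ‖ut - u‖⁻¹ • (ut - u))
    (hfperp : ‖f - (Submodule.orthogonalProjectionOnto K f : E)‖ ≠ 0)
    (L M : (Submodule.span ℂ {x})ᗮ →L[ℂ] (Submodule.span ℂ {x})ᗮ)
    (hL : ∀ w : (Submodule.span ℂ {x})ᗮ,
        L w = Submodule.orthogonalProjectionOnto (Submodule.span ℂ {x})ᗮ (B w))
    (hML : M * (L - (-(a2 / a1)) • 1) = 1)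
    (ε εt : ℝ)
    (hε : ε = ‖ut - u‖ / ‖u‖)
    (hεt : εt = ‖(ut - u) - (Submodule.orthogonalProjectionOnto K (ut - u) : E)‖
                / ‖u - (Submodule.orthogonalProjectionOnto K u : E)‖) :
    ε ≤ 2 * ‖B‖ / (‖M‖⁻¹ * ‖f - (Submodule.orthogonalProjectionOnto K f : E)‖) * εt := by
  simp only [← starProjection_apply] at hsV hPu hfperp hεt ⊢
  have hgV : g ∈ (ℂ ∙ x)ᗮ := mem_orthogonal_singleton_iff_inner_right.mpr hxg
  have hcμ : ‖c * (lam - σ)⁻¹‖ ≤ ‖B‖ := by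
    rw [norm_mul, norm_inv, ← one_div]
    exact (mul_le_of_le_one_left (by positivity) hc).trans hB
  have hres : ‖u - K.starProjection u‖ ≤ 2 * ‖B‖ * ‖M‖ * ‖u‖ := by
    subst hu
    exact norm_sub_starProjection_smul_apply_add_smul_le K hBx hcμ hgV hg hdecomp hyK
      (by rwa [Complex.norm_of_nonneg hs]) ha1 hL hML
  have hq : 0 < ‖u - K.starProjection u‖ := norm_pos_iff.mpr hPu
  have hφ : 0 < ‖f - K.starProjection f‖ := (norm_nonneg _).lt_of_ne' hfperp
  have hBMu := hq.trans_le hres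
  have hu₀ : 0 < ‖u‖ := pos_of_mul_pos_right hBMu (by positivity)
  have hM : 0 < ‖M‖ :=
    pos_of_mul_pos_right (pos_of_mul_pos_left hBMu (norm_nonneg _)) (by positivity)
  rw [hε, hεt, K.norm_sub_starProjection_eq_norm_mul (sub_ne_zero.mpr hne), ← hf,
    show 2 * ‖B‖ / (‖M‖⁻¹ * ‖f - K.starProjection f‖)
        * (‖ut - u‖ * ‖f - K.starProjection f‖ / ‖u - K.starProjection u‖)
      = ‖ut - u‖ * (2 * ‖B‖ * ‖M‖) / ‖u - K.starProjection u‖ by field_simp,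
    div_le_div_iff₀ hu₀ hq]
  linarith [mul_le_mul_of_nonneg_left hres (norm_nonneg (ut - u))]

/-- Theorem 3: combining the previous bounds,
`ε ≤ [2‖B‖ / (sep(α,L) · sin∠(𝒱,f))] · ε̃`, where `α = -α₂/α₁`,
`L` is the compression of `B` to the orthogonal complement of the eigenvector `x`,
and `sep(α,L) = ‖(L - αI)⁻¹‖⁻¹ = ‖M‖⁻¹`. -/
theorem eps_le_sep_bound {E : Type*} [NormedAddCommGroup E] [InnerProductSpace ℂ E]
    [FiniteDimensional ℂ E]
    (B : E →L[ℂ] E) (lam σ : ℂ) (hlam : lam ≠ σ)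
    (x : E) (hx : ‖x‖ = 1) (hBx : B x = (lam - σ)⁻¹ • x)
    (hB : 1 / ‖lam - σ‖ ≤ ‖B‖)
    (K : Submodule ℂ E)
    (y g : E) (hyK : y ∈ K) (hy : ‖y‖ = 1) (hg : ‖g‖ = 1) (hxg : ⟪x, g⟫ = 0)
    (c : ℂ) (s : ℝ) (hs : 0 ≤ s) (hc : ‖c‖ ≤ 1)
    (hdecomp : y = c • x + (s : ℂ) • g)
    (hsV : ‖x - (Submodule.orthogonalProjectionOnto K x : E)‖ ≤ s)
    (a1 a2 : ℂ) (ha1 : a1 ≠ 0)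
    (u ut f : E) (hu : u = a1 • B y + a2 • y) (hune : u ≠ 0)
    (hPu : u - (Submodule.orthogonalProjectionOnto K u : E) ≠ 0)
    (hBy : B y - (-(a2 / a1)) • y ≠ 0)
    (hne : ut ≠ u) (hf : f = ‖ut - u‖⁻¹ • (ut - u))
    (hfperp : ‖f - (Submodule.orthogonalProjectionOnto K f : E)‖ ≠ 0)
    (L M : (Submodule.span ℂ {x})ᗮ →L[ℂ] (Submodule.span ℂ {x})ᗮ)
    (hL : ∀ w : (Submodule.span ℂ {x})ᗮ,
        L w = Submodule.orthogonalProjectionOnto (Submodule.span ℂ {x})ᗮ (B w))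
    (hLM : (L - (-(a2 / a1)) • 1) * M = 1) (hML : M * (L - (-(a2 / a1)) • 1) = 1)
    (ε εt : ℝ)
    (hε : ε = ‖ut - u‖ / ‖u‖)
    (hεt : εt = ‖(ut - u) - (Submodule.orthogonalProjectionOnto K (ut - u) : E)‖
                / ‖u - (Submodule.orthogonalProjectionOnto K u : E)‖) :
    ε ≤ 2 * ‖B‖ / (‖M‖⁻¹ * ‖f - (Submodule.orthogonalProjectionOnto K f : E)‖) * εt :=
  eps_le_sep_bound_general B lam σ x hBx hB K y g hyK hg hxg c s hs hc hdecomp hsV a1 a2 ha1 u ut f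
    hu hPu hne hf hfperp L M hL hML ε εt hε hεt
end

section
/- With 𝒱, v, 𝒱₊, x, x_⊥ = (I - P_V)x ≠ 0 as above, sin∠(𝒱₊, x) = sin∠(𝒱, x) · sin∠(v, x_⊥), where sin∠(v, x_⊥) = ‖(I - vv^H) x_⊥‖ / ‖x_⊥‖. -/
open scoped InnerProductSpace

namespace Submodule

variable {𝕜 E : Type*} [RCLike 𝕜] [NormedAddCommGroup E] [InnerProductSpace 𝕜 E]

theorem IsOrtho.starProjection_sup_apply {U V : Submodule 𝕜 E}
    [U.HasOrthogonalProjection] [V.HasOrthogonalProjection] [(U ⊔ V).HasOrthogonalProjection]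
    (h : U ⟂ V) (x : E) :
    (U ⊔ V).starProjection x = U.starProjection x + V.starProjection x := by
  refine eq_starProjection_of_mem_orthogonal
    (add_mem (mem_sup_left (starProjection_apply_mem U x))
      (mem_sup_right (starProjection_apply_mem V x))) ?_
  rw [← inf_orthogonal]
  constructor
  · rw [← sub_sub]
    exact sub_mem (sub_starProjection_mem_orthogonal x) (h.ge (starProjection_apply_mem V x))
  · rw [sub_add_eq_sub_sub_swap]
    exact sub_mem (sub_starProjection_mem_orthogonal x) (h.le (starProjection_apply_mem U x))

theorem sub_starProjection_sup_span_singleton {K : Submodule 𝕜 E} {v : E}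
    [K.HasOrthogonalProjection] [(K ⊔ 𝕜 ∙ v).HasOrthogonalProjection]
    (hv : ‖v‖ = 1) (hvK : v ∈ Kᗮ) (x : E) :
    x - (K ⊔ 𝕜 ∙ v).starProjection x
      = (x - K.starProjection x) - ⟪v, x - K.starProjection x⟫_𝕜 • v := by
  have hKv : K ⟂ 𝕜 ∙ v := (isOrtho_iff_le.mpr ((span_singleton_le_iff_mem v _).mpr hvK)).symm
  have hv_inner : ⟪v, K.starProjection x⟫_𝕜 = 0 :=
    inner_left_of_mem_orthogonal (starProjection_apply_mem K x) hvK
  rw [hKv.starProjection_sup_apply, starProjection_unit_singleton 𝕜 hv, inner_sub_right,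
    hv_inner, sub_zero, sub_sub]

end Submodule

local notation "⟪" x ", " y "⟫" => @inner ℂ _ _ x y

theorem sin_expanded_eq_sin_mul_sin_general {E : Type*} [NormedAddCommGroup E]
    [InnerProductSpace ℂ E] [FiniteDimensional ℂ E]
    (K : Submodule ℂ E) (v : E) (hv : ‖v‖ = 1) (hvK : v ∈ Kᗮ)
    (x : E)
    (hxp : x - (Submodule.orthogonalProjection K x : E) ≠ 0) :
    ‖x - (Submodule.orthogonalProjection (K ⊔ Submodule.span ℂ {v}) x : E)‖
      = ‖x - (Submodule.orthogonalProjection K x : E)‖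
        * (‖(x - (Submodule.orthogonalProjection K x : E))
              - ⟪v, x - (Submodule.orthogonalProjection K x : E)⟫ • v‖
           / ‖x - (Submodule.orthogonalProjection K x : E)‖) := by
  simp only [Submodule.coe_orthogonalProjectionOnto_apply] at hxp ⊢
  rw [Submodule.sub_starProjection_sup_span_singleton hv hvK,
    mul_div_cancel₀ _ (norm_ne_zero_iff.mpr hxp)]

/-- `sin∠(𝒱₊, x) = sin∠(𝒱, x) · sin∠(v, x_⊥)`, where
`sin∠(v, x_⊥) = ‖(I - vvᴴ)x_⊥‖ / ‖x_⊥‖` and `x_⊥ = (I - P_V)x`. -/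
theorem sin_expanded_eq_sin_mul_sin {E : Type*} [NormedAddCommGroup E]
    [InnerProductSpace ℂ E] [FiniteDimensional ℂ E]
    (K : Submodule ℂ E) (v : E) (hv : ‖v‖ = 1) (hvK : v ∈ Kᗮ)
    (x : E) (hx : ‖x‖ = 1)
    (hxp : x - (Submodule.orthogonalProjection K x : E) ≠ 0) :
    ‖x - (Submodule.orthogonalProjection (K ⊔ Submodule.span ℂ {v}) x : E)‖
      = ‖x - (Submodule.orthogonalProjection K x : E)‖
        * (‖(x - (Submodule.orthogonalProjection K x : E))
              - ⟪v, x - (Submodule.orthogonalProjection K x : E)⟫ • v‖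
           / ‖x - (Submodule.orthogonalProjection K x : E)‖) :=
  sin_expanded_eq_sin_mul_sin_general K v hv hvK x hxp
end

section
/- Let v, ṽ be unit vectors with P_V v = P_V ṽ = 0, x a unit vector with x_⊥ = (I-P_V)x ≠ 0, 𝒱₊ = 𝒱 ⊕ span{v}, 𝒱̃₊ = 𝒱 ⊕ span{ṽ}, and assume sin∠(v, x_⊥) ≠ 0. Then sin∠(𝒱̃₊, x) / sin∠(𝒱₊, x) = sin∠(ṽ, x_⊥) / sin∠(v, x_⊥). -/
/-! Since `v ⟂ 𝒱`, the residual of `x` with respect to `𝒱 + span{v}` is the residual of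
`x_⊥` with respect to `span{v}`, so `sin∠(𝒱₊, x) = ‖x_⊥‖ · sin∠(v, x_⊥)`, and likewise for `ṽ`.
The common factor `‖x_⊥‖` cancels in the ratio. -/

local notation "⟪" x ", " y "⟫" => @inner ℂ _ _ x y

namespace Submodule

variable {𝕜 E : Type*} [RCLike 𝕜] [NormedAddCommGroup E] [InnerProductSpace 𝕜 E]
  {U W : Submodule 𝕜 E} [U.HasOrthogonalProjection] [W.HasOrthogonalProjection]
  [(U ⊔ W).HasOrthogonalProjection]

theorem IsOrtho.starProjection_sup (h : U ⟂ W) (x : E) :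
    (U ⊔ W).starProjection x = U.starProjection x + W.starProjection x := by
  refine eq_starProjection_of_mem_of_inner_eq_zero
    (add_mem_sup (starProjection_apply_mem U x) (starProjection_apply_mem W x)) fun y hy ↦ ?_
  suffices x - (U.starProjection x + W.starProjection x) ∈ Uᗮ ⊓ Wᗮ by
    rw [inf_orthogonal] at this
    exact inner_left_of_mem_orthogonal hy this
  have hWU : W ≤ Uᗮ := isOrtho_iff_le.mp h.symm
  have hUW : U ≤ Wᗮ := isOrtho_iff_le.mp h
  constructor
  · rw [sub_add_eq_sub_sub]
    exact sub_mem (sub_starProjection_mem_orthogonal x) (hWU (starProjection_apply_mem W x))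
  · rw [add_comm, sub_add_eq_sub_sub]
    exact sub_mem (sub_starProjection_mem_orthogonal x) (hUW (starProjection_apply_mem U x))

theorem IsOrtho.sub_starProjection_sup (h : U ⟂ W) (x : E) :
    x - (U ⊔ W).starProjection x
      = (x - U.starProjection x) - W.starProjection (x - U.starProjection x) := by
  have hUx : W.starProjection (U.starProjection x) = 0 :=
    (W.starProjection_apply_eq_zero_iff).mpr (isOrtho_iff_le.mp h (starProjection_apply_mem U x))
  rw [h.starProjection_sup, map_sub, hUx, sub_zero, sub_add_eq_sub_sub]

end Submodule

theorem sin_ratio_eq_general {E : Type*} [NormedAddCommGroup E]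
    [InnerProductSpace ℂ E] [FiniteDimensional ℂ E]
    (K : Submodule ℂ E) (v vt : E) (hv : ‖v‖ = 1) (hvt : ‖vt‖ = 1)
    (hvK : v ∈ Kᗮ) (hvtK : vt ∈ Kᗮ)
    (x : E)
    (hxp : x - (Submodule.orthogonalProjectionOnto K x : E) ≠ 0) :
    ‖x - (Submodule.orthogonalProjectionOnto (K ⊔ Submodule.span ℂ {vt}) x : E)‖
      / ‖x - (Submodule.orthogonalProjectionOnto (K ⊔ Submodule.span ℂ {v}) x : E)‖
    = (‖(x - (Submodule.orthogonalProjectionOnto K x : E))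
          - ⟪vt, x - (Submodule.orthogonalProjectionOnto K x : E)⟫ • vt‖
        / ‖x - (Submodule.orthogonalProjectionOnto K x : E)‖)
      / (‖(x - (Submodule.orthogonalProjectionOnto K x : E))
          - ⟪v, x - (Submodule.orthogonalProjectionOnto K x : E)⟫ • v‖
        / ‖x - (Submodule.orthogonalProjectionOnto K x : E)‖) := by
  have residual_sup {w : E} (hw : ‖w‖ = 1) (hwK : w ∈ Kᗮ) :
      x - (K ⊔ Submodule.span ℂ {w}).starProjection x
        = (x - K.starProjection x) - ⟪w, x - K.starProjection x⟫ • w := by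
    have hKw : K ⟂ Submodule.span ℂ {w} :=
      K.isOrtho_orthogonal_right.mono_right ((Submodule.span_singleton_le_iff_mem w _).mpr hwK)
    rw [hKw.sub_starProjection_sup, Submodule.starProjection_unit_singleton ℂ hw]
  simp only [Submodule.coe_orthogonalProjectionOnto_apply] at hxp ⊢
  rw [residual_sup hv hvK, residual_sup hvt hvtK,
    div_div_div_cancel_right₀ (norm_ne_zero_iff.mpr hxp)]

/-- with `𝒱₊ = 𝒱 ⊕ span{v}` and `𝒱̃₊ = 𝒱 ⊕ span{ṽ}`,
`sin∠(𝒱̃₊, x) / sin∠(𝒱₊, x) = sin∠(ṽ, x_⊥) / sin∠(v, x_⊥)`. -/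
theorem sin_ratio_eq {E : Type*} [NormedAddCommGroup E]
    [InnerProductSpace ℂ E] [FiniteDimensional ℂ E]
    (K : Submodule ℂ E) (v vt : E) (hv : ‖v‖ = 1) (hvt : ‖vt‖ = 1)
    (hvK : v ∈ Kᗮ) (hvtK : vt ∈ Kᗮ)
    (x : E) (hx : ‖x‖ = 1)
    (hxp : x - (Submodule.orthogonalProjectionOnto K x : E) ≠ 0)
    (hsv : ‖(x - (Submodule.orthogonalProjectionOnto K x : E))
              - ⟪v, x - (Submodule.orthogonalProjectionOnto K x : E)⟫ • v‖
           / ‖x - (Submodule.orthogonalProjectionOnto K x : E)‖ ≠ 0) :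
    ‖x - (Submodule.orthogonalProjectionOnto (K ⊔ Submodule.span ℂ {vt}) x : E)‖
      / ‖x - (Submodule.orthogonalProjectionOnto (K ⊔ Submodule.span ℂ {v}) x : E)‖
    = (‖(x - (Submodule.orthogonalProjectionOnto K x : E))
          - ⟪vt, x - (Submodule.orthogonalProjectionOnto K x : E)⟫ • vt‖
        / ‖x - (Submodule.orthogonalProjectionOnto K x : E)‖)
      / (‖(x - (Submodule.orthogonalProjectionOnto K x : E))
          - ⟪v, x - (Submodule.orthogonalProjectionOnto K x : E)⟫ • v‖
        / ‖x - (Submodule.orthogonalProjectionOnto K x : E)‖) :=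
  sin_ratio_eq_general K v vt hv hvt hvK hvtK x hxp
end

section
/- Let v be the unit vector in the direction of (I - P_V)By (assumed nonzero), where y ∈ 𝒱 is a unit vector with y = cos∠(y,x)x + sin∠(y,x)g, g ⟂ x, ‖g‖ = 1, and Bx = (1/(λ-σ))x, x_⊥ = (I-P_V)x. Then |cos∠(v, x_⊥)| ≤ 2‖B‖ sin∠(y, x) / ‖(I - P_V)By‖, where cos∠(v, x_⊥) = v^H x_⊥ / ‖x_⊥‖ (assuming x_⊥ ≠ 0). -/
/-! Since `x - P x ⟂ K`, removing the `K`-component of `B y` does not change its inner product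
with `x - P x`. Writing `B y = (c / (λ - σ)) • x + s • B g`, the first term contributes
`‖c‖ / ‖λ - σ‖ * ‖x - P x‖ ^ 2 ≤ ‖B‖ * s * ‖x - P x‖`, because `⟪x, x - P x⟫ = ‖x - P x‖ ^ 2`,
and the second at most `s * ‖B‖ * ‖x - P x‖` by Cauchy–Schwarz. -/

local notation "⟪" x ", " y "⟫" => @inner ℂ _ _ x y

section

variable {𝕜 E : Type*} [RCLike 𝕜] [NormedAddCommGroup E] [InnerProductSpace 𝕜 E]
  (K : Submodule 𝕜 E) [K.HasOrthogonalProjection]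

theorem Submodule.inner_sub_orthogonalProjectionOnto_left_eq (u x : E) :
    inner 𝕜 (u - (K.orthogonalProjectionOnto u : E)) (x - (K.orthogonalProjectionOnto x : E)) =
      inner 𝕜 u (x - (K.orthogonalProjectionOnto x : E)) := by
  rw [inner_sub_left, Submodule.inner_right_of_mem_orthogonal (K.orthogonalProjectionOnto u).2
    (by simpa only [K.starProjection_apply] using K.sub_starProjection_mem_orthogonal x), sub_zero]

theorem Submodule.norm_inner_self_sub_orthogonalProjectionOnto (x : E) :
    ‖inner 𝕜 x (x - (K.orthogonalProjectionOnto x : E))‖ =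
      ‖x - (K.orthogonalProjectionOnto x : E)‖ ^ 2 := by
  rw [← K.inner_sub_orthogonalProjectionOnto_left_eq, inner_self_eq_norm_sq_to_K]
  norm_cast
  exact Real.norm_of_nonneg (by positivity)

theorem norm_inner_apply_eigen_add_sub_orthogonalProjectionOnto_le (B : E →L[𝕜] E)
    {x z : E} {μ c : 𝕜} {s : ℝ} (hBx : B x = μ • x) (hμ : ‖μ‖ ≤ ‖B‖) (hc : ‖c‖ ≤ 1)
    (hz : ‖z‖ ≤ s) (hxs : ‖x - (K.orthogonalProjectionOnto x : E)‖ ≤ s) :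
    ‖inner 𝕜 (B (c • x + z)) (x - (K.orthogonalProjectionOnto x : E))‖ ≤
      2 * ‖B‖ * s * ‖x - (K.orthogonalProjectionOnto x : E)‖ := by
  set xp := x - (K.orthogonalProjectionOnto x : E)
  have hcμ : ‖c * μ‖ ≤ ‖B‖ := by
    rw [norm_mul]
    exact (mul_le_of_le_one_left (norm_nonneg μ) hc).trans hμ
  have h_eigen : ‖inner 𝕜 ((c * μ) • x) xp‖ ≤ ‖B‖ * s * ‖xp‖ := by
    rw [inner_smul_left, norm_mul, RCLike.norm_conj, K.norm_inner_self_sub_orthogonalProjectionOnto,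
      sq, ← mul_assoc]
    gcongr
  have h_rest : ‖inner 𝕜 (B z) xp‖ ≤ ‖B‖ * s * ‖xp‖ := calc
    _ ≤ ‖B z‖ * ‖xp‖ := norm_inner_le_norm _ _
    _ ≤ ‖B‖ * ‖z‖ * ‖xp‖ := by gcongr; exact B.le_opNorm z
    _ ≤ ‖B‖ * s * ‖xp‖ := by gcongr
  calc ‖inner 𝕜 (B (c • x + z)) xp‖
      = ‖inner 𝕜 ((c * μ) • x) xp + inner 𝕜 (B z) xp‖ := by
        rw [map_add, map_smul, hBx, smul_smul, inner_add_left]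
    _ ≤ ‖B‖ * s * ‖xp‖ + ‖B‖ * s * ‖xp‖ := (norm_add_le _ _).trans (add_le_add h_eigen h_rest)
    _ = 2 * ‖B‖ * s * ‖xp‖ := by ring

end

theorem cos_v_xperp_bound_general {E : Type*} [NormedAddCommGroup E] [InnerProductSpace ℂ E]
    [FiniteDimensional ℂ E]
    (B : E →L[ℂ] E) (lam σ : ℂ)
    (x : E) (hBx : B x = (lam - σ)⁻¹ • x)
    (hB : 1 / ‖lam - σ‖ ≤ ‖B‖)
    (K : Submodule ℂ E)
    (y g : E) (hg : ‖g‖ = 1)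
    (c : ℂ) (s : ℝ) (hc : ‖c‖ ≤ 1)
    (hdecomp : y = c • x + (s : ℂ) • g)
    (hsV : ‖x - (K.orthogonalProjectionOnto x : E)‖ ≤ s)
    (v : E)
    (hv : v = ‖B y - (K.orthogonalProjectionOnto (B y) : E)‖⁻¹
                • (B y - (K.orthogonalProjectionOnto (B y) : E))) :
    ‖⟪v, x - (K.orthogonalProjectionOnto x : E)⟫‖
        / ‖x - (K.orthogonalProjectionOnto x : E)‖
      ≤ 2 * ‖B‖ * s / ‖B y - (K.orthogonalProjectionOnto (B y) : E)‖ := by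
  set xp := x - (K.orthogonalProjectionOnto x : E)
  set w := B y - (K.orthogonalProjectionOnto (B y) : E)
  have hs : 0 ≤ s := (norm_nonneg xp).trans hsV
  have h_inner : ‖⟪w, xp⟫‖ ≤ 2 * ‖B‖ * s * ‖xp‖ := by
    rw [K.inner_sub_orthogonalProjectionOnto_left_eq, hdecomp]
    refine norm_inner_apply_eigen_add_sub_orthogonalProjectionOnto_le K B hBx
      (by rwa [norm_inv, ← one_div]) hc ?_ hsV
    rw [norm_smul, hg, mul_one, Complex.norm_real, Real.norm_of_nonneg hs]
  have h_normalize : ‖⟪v, xp⟫‖ = ‖w‖⁻¹ * ‖⟪w, xp⟫‖ := by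
    rw [hv, RCLike.real_smul_eq_coe_smul (K := ℂ), inner_smul_left, norm_mul, Complex.norm_conj,
      RCLike.norm_ofReal, abs_inv, abs_norm]
  refine div_le_of_le_mul₀ (norm_nonneg xp) (by positivity) ?_
  calc ‖⟪v, xp⟫‖ = ‖w‖⁻¹ * ‖⟪w, xp⟫‖ := h_normalize
    _ ≤ ‖w‖⁻¹ * (2 * ‖B‖ * s * ‖xp‖) := by gcongr
    _ = 2 * ‖B‖ * s / ‖w‖ * ‖xp‖ := by ring

/-- with `v` the unit vector in the direction of `(I - P_V)By`,
`|cos∠(v, x_⊥)| ≤ 2‖B‖ sin∠(y, x) / ‖(I - P_V)By‖`. -/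
theorem cos_v_xperp_bound {E : Type*} [NormedAddCommGroup E] [InnerProductSpace ℂ E]
    [FiniteDimensional ℂ E]
    (B : E →L[ℂ] E) (lam σ : ℂ) (hlam : lam ≠ σ)
    (x : E) (hx : ‖x‖ = 1) (hBx : B x = (lam - σ)⁻¹ • x)
    (hB : 1 / ‖lam - σ‖ ≤ ‖B‖)
    (K : Submodule ℂ E)
    (y g : E) (hyK : y ∈ K) (hy : ‖y‖ = 1) (hg : ‖g‖ = 1) (hxg : ⟪x, g⟫ = 0)
    (c : ℂ) (s : ℝ) (hs : 0 ≤ s) (hc : ‖c‖ ≤ 1)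
    (hdecomp : y = c • x + (s : ℂ) • g)
    (hxp : x - (K.orthogonalProjectionOnto x : E) ≠ 0)
    (hsV : ‖x - (K.orthogonalProjectionOnto x : E)‖ ≤ s)
    (hPBy : B y - (K.orthogonalProjectionOnto (B y) : E) ≠ 0)
    (v : E)
    (hv : v = ‖B y - (K.orthogonalProjectionOnto (B y) : E)‖⁻¹
                • (B y - (K.orthogonalProjectionOnto (B y) : E))) :
    ‖⟪v, x - (K.orthogonalProjectionOnto x : E)⟫‖
        / ‖x - (K.orthogonalProjectionOnto x : E)‖
      ≤ 2 * ‖B‖ * s / ‖B y - (K.orthogonalProjectionOnto (B y) : E)‖ :=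
  cos_v_xperp_bound_general B lam σ x hBx hB K y g hg c s hc hdecomp hsV v hv
end
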